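/- Consider noisy SGD updates x_{t+1} = x_t − η_t(g_t + z_t) where E[g_t | x_t] = ∇F(x_t), ‖g_t‖ ≤ L almost surely, and z_t ∼ N(0, L²σ²I_p) is independent of everything else. Suppose F satisfies the expected-curvature condition E[⟨∇F(x_t), x_t − x*⟩] ≥ ν·E[‖x_t − x*‖²] with ν > 0 along the trajectory, for a minimizer x* of F. Then with step sizes η_t = 1/(νt), for every t ≥ 2, E[‖x_t − x*‖²] ≤ 2L²(1 + pσ²)/(t·ν²). -/

import Mathlib

/-! Write `y_t = x_t - x*`. Expanding `‖y_t - η_t g_t - η_t z_t‖²`, the noise is centred and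
independent of `(x_t, g_t)`, so it only adds `η_t² E‖z_t‖² = η_t² p L²σ²`; since `y_t` is a
function of `x_t`, conditioning on `x_t` replaces `E⟨g_t, y_t⟩` by `E⟨∇F(x_t), y_t⟩ ≥ ν E‖y_t‖²`.
This gives `E‖y_{t+1}‖² ≤ (1 - 2νη_t) E‖y_t‖² + η_t² L²(1 + pσ²)`, so `a_t = E‖y_t‖²` satisfies
`a_{t+1} ≤ (1 - 2/t) a_t + b/t²` with `b = L²(1 + pσ²)/ν²`. At `t = 1` the coefficient is
negative, so `a_2 ≤ b`, and induction gives `a_t ≤ 2b/t`. -/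

open MeasureTheory ProbabilityTheory

/-- `z` is a centered Gaussian vector in `ℝ^p` with covariance `v • I_p`:
its coordinates are independent real Gaussians `N(0, v)`. -/
def IsGaussianVec {Ω : Type*} [MeasurableSpace Ω] (P : Measure Ω) {p : ℕ}
    (z : Ω → EuclideanSpace ℝ (Fin p)) (v : NNReal) : Prop :=
  (∀ i, Measure.map (fun ω => z ω i) P = gaussianReal 0 v) ∧
    iIndepFun (fun i ω => z ω i) P

open scoped NNReal RealInnerProductSpace

section L2

variable {α E : Type*} {m : MeasurableSpace α} {μ : Measure α} [NormedAddCommGroup E]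
  {f g : α → E}

lemma integral_norm_sq_of_not_memLp (hf : AEStronglyMeasurable f μ) (hf2 : ¬MemLp f 2 μ) :
    ∫ a, ‖f a‖ ^ 2 ∂μ = 0 :=
  integral_undef ((memLp_two_iff_integrable_sq_norm hf).not.1 hf2)

variable [InnerProductSpace ℝ E]

lemma MeasureTheory.MemLp.integrable_inner (hf : MemLp f 2 μ) (hg : MemLp g 2 μ) :
    Integrable (fun a => ⟪f a, g a⟫) μ :=
  memLp_one_iff_integrable.1 ((innerSL ℝ).memLp_of_bilin 1 hf hg)

lemma integral_norm_sub_sq (hf : MemLp f 2 μ) (hg : MemLp g 2 μ) :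
    ∫ a, ‖f a - g a‖ ^ 2 ∂μ =
      ∫ a, ‖f a‖ ^ 2 ∂μ - 2 * ∫ a, ⟪f a, g a⟫ ∂μ + ∫ a, ‖g a‖ ^ 2 ∂μ := by
  have hf2 := (memLp_two_iff_integrable_sq_norm hf.1).1 hf
  have hg2 := (memLp_two_iff_integrable_sq_norm hg.1).1 hg
  have hfg := (hf.integrable_inner hg).const_mul 2
  simp_rw [norm_sub_sq_real]
  rw [integral_add (f := fun a => ‖f a‖ ^ 2 - 2 * ⟪f a, g a⟫) (hf2.sub hfg) hg2,
    integral_sub hf2 hfg, integral_const_mul]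

lemma integral_norm_sub_sq_of_indepFun [CompleteSpace E] [MeasurableSpace E] [BorelSpace E]
    [IsFiniteMeasure μ] (hfg : IndepFun f g μ) (hf : MemLp f 2 μ) (hg : MemLp g 2 μ)
    (hg0 : ∫ a, g a ∂μ = 0) :
    ∫ a, ‖f a - g a‖ ^ 2 ∂μ = ∫ a, ‖f a‖ ^ 2 ∂μ + ∫ a, ‖g a‖ ^ 2 ∂μ := by
  have hinner : ∫ a, ⟪f a, g a⟫ ∂μ = 0 := by
    refine (hfg.integral_bilin (hf.integrable one_le_two) (hg.integrable one_le_two)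
      (innerSL ℝ)).trans ?_
    simp [hg0]
  rw [integral_norm_sub_sq hf hg, hinner]
  ring

end L2

lemma integral_inner_eq_of_condExp_ae_eq {Ω E : Type*} {m mΩ : MeasurableSpace Ω}
    {μ : Measure Ω} [IsFiniteMeasure μ] [NormedAddCommGroup E] [InnerProductSpace ℝ E]
    [CompleteSpace E] (hm : m ≤ mΩ) {g y G : Ω → E} (hy : StronglyMeasurable[m] y)
    (hgy : Integrable (fun ω => ⟪g ω, y ω⟫) μ) (hg : Integrable g μ) (hG : μ[g|m] =ᵐ[μ] G) :
    ∫ ω, ⟪g ω, y ω⟫ ∂μ = ∫ ω, ⟪G ω, y ω⟫ ∂μ := by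
  rw [← integral_condExp hm]
  refine integral_congr_ae
    ((condExp_bilin_of_stronglyMeasurable_right (innerSL ℝ) hy hgy hg).trans ?_)
  filter_upwards [hG] with ω hω
  rw [hω, innerSL_apply_apply]

lemma integral_sq_gaussianReal_zero (v : ℝ≥0) : ∫ x, x ^ 2 ∂gaussianReal 0 v = v := by
  rw [← variance_of_integral_eq_zero aemeasurable_id' integral_id_gaussianReal,
    variance_fun_id_gaussianReal]

section GaussianCoordinates

variable {Ω ι : Type*} [MeasurableSpace Ω] {P : Measure Ω} [Fintype ι]
  {z : Ω → EuclideanSpace ℝ ι} {v : ℝ≥0}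

lemma memLp_two_of_hasLaw_coord (hzm : AEStronglyMeasurable z P)
    (hz : ∀ i, HasLaw (fun ω => z ω i) (gaussianReal 0 v) P) : MemLp z 2 P := by
  rw [memLp_two_iff_integrable_sq_norm hzm]
  simp_rw [EuclideanSpace.real_norm_sq_eq]
  exact integrable_finsetSum _ fun i _ => (hz i).hasGaussianLaw.memLp_two.integrable_sq

lemma integral_eq_zero_of_hasLaw_coord [IsProbabilityMeasure P] (hzm : AEStronglyMeasurable z P)
    (hz : ∀ i, HasLaw (fun ω => z ω i) (gaussianReal 0 v) P) : ∫ ω, z ω ∂P = 0 := by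
  ext i
  have hi := (EuclideanSpace.proj i : EuclideanSpace ℝ ι →L[ℝ] ℝ).integral_comp_comm
    ((memLp_two_of_hasLaw_coord hzm hz).integrable one_le_two)
  simp only [PiLp.proj_apply] at hi
  rw [← hi, (hz i).integral_eq, integral_id_gaussianReal]
  rfl

lemma integral_norm_sq_of_hasLaw_coord
    (hz : ∀ i, HasLaw (fun ω => z ω i) (gaussianReal 0 v) P) :
    ∫ ω, ‖z ω‖ ^ 2 ∂P = Fintype.card ι * v := by
  have hcoord : ∀ i, ∫ ω, z ω i ^ 2 ∂P = v := fun i => by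
    rw [← integral_sq_gaussianReal_zero]
    exact (hz i).integral_comp (f := fun x : ℝ => x ^ 2) (by fun_prop)
  simp_rw [EuclideanSpace.real_norm_sq_eq]
  rw [integral_finsetSum _ fun i _ => (hz i).hasGaussianLaw.memLp_two.integrable_sq]
  simp [hcoord]

lemma integral_norm_sub_smul_sq_of_hasLaw_coord [IsProbabilityMeasure P]
    {w : Ω → EuclideanSpace ℝ ι} (hw : MemLp w 2 P) (hzm : AEStronglyMeasurable z P)
    (hz : ∀ i, HasLaw (fun ω => z ω i) (gaussianReal 0 v) P) (hwz : IndepFun w z P) (η : ℝ) :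
    ∫ ω, ‖w ω - η • z ω‖ ^ 2 ∂P = ∫ ω, ‖w ω‖ ^ 2 ∂P + η ^ 2 * (Fintype.card ι * v) := by
  have hz0 : ∫ ω, η • z ω ∂P = 0 := by
    rw [integral_smul, integral_eq_zero_of_hasLaw_coord hzm hz, smul_zero]
  rw [integral_norm_sub_sq_of_indepFun (f := w) (g := fun ω => η • z ω)
    (hwz.comp measurable_id (measurable_const_smul η)) hw
    ((memLp_two_of_hasLaw_coord hzm hz).const_smul η) hz0]
  simp_rw [norm_smul, mul_pow, Real.norm_eq_abs, sq_abs]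
  rw [integral_const_mul, integral_norm_sq_of_hasLaw_coord hz]

end GaussianCoordinates

lemma integral_norm_sub_smul_sq_le {Ω E : Type*} [MeasurableSpace Ω] {P : Measure Ω}
    [IsProbabilityMeasure P] [NormedAddCommGroup E] [InnerProductSpace ℝ E] {y g : Ω → E}
    {L ν η : ℝ} (hy : MemLp y 2 P) (hgm : AEStronglyMeasurable g P)
    (hgL : ∀ᵐ ω ∂P, ‖g ω‖ ≤ L) (hη : 0 ≤ η)
    (hcurv : ν * ∫ ω, ‖y ω‖ ^ 2 ∂P ≤ ∫ ω, ⟪g ω, y ω⟫ ∂P) :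
    ∫ ω, ‖y ω - η • g ω‖ ^ 2 ∂P ≤ (1 - 2 * ν * η) * ∫ ω, ‖y ω‖ ^ 2 ∂P + η ^ 2 * L ^ 2 := by
  have hg : MemLp g 2 P := (memLp_top_of_bound hgm L hgL).mono_exponent le_top
  have hg2 : ∫ ω, ‖g ω‖ ^ 2 ∂P ≤ L ^ 2 := by
    have := integral_mono_ae ((memLp_two_iff_integrable_sq_norm hgm).1 hg)
      (integrable_const (L ^ 2)) (hgL.mono fun ω h => pow_le_pow_left₀ (norm_nonneg _) h 2)
    simpa using this
  rw [integral_norm_sub_sq (g := fun ω => η • g ω) hy (hg.const_smul η)]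
  simp_rw [real_inner_smul_right, real_inner_comm (g _), norm_smul, mul_pow, Real.norm_eq_abs,
    sq_abs]
  rw [integral_const_mul, integral_const_mul]
  nlinarith [mul_le_mul_of_nonneg_left hcurv hη, mul_le_mul_of_nonneg_left hg2 (sq_nonneg η)]

lemma integral_norm_sq_sgd_step_le {Ω ι : Type*} [MeasurableSpace Ω] {P : Measure Ω}
    [IsProbabilityMeasure P] [Fintype ι] {F' : EuclideanSpace ℝ ι → EuclideanSpace ℝ ι}
    {xstar : EuclideanSpace ℝ ι} {x g z : Ω → EuclideanSpace ℝ ι} {L ν η : ℝ} {v : ℝ≥0}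
    (hx : Measurable x) (hg : Measurable g) (hz : Measurable z)
    (hunbiased : P[g|MeasurableSpace.comap x inferInstance] =ᵐ[P] fun ω => F' (x ω))
    (hgL : ∀ᵐ ω ∂P, ‖g ω‖ ≤ L) (hzlaw : ∀ i, HasLaw (fun ω => z ω i) (gaussianReal 0 v) P)
    (hindep : IndepFun (fun ω => (x ω, g ω)) z P) (hη : 0 ≤ η)
    (hcurv : ν * ∫ ω, ‖x ω - xstar‖ ^ 2 ∂P ≤ ∫ ω, ⟪F' (x ω), x ω - xstar⟫ ∂P) :
    ∫ ω, ‖x ω - η • (g ω + z ω) - xstar‖ ^ 2 ∂P ≤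
      (1 - 2 * ν * η) * ∫ ω, ‖x ω - xstar‖ ^ 2 ∂P + η ^ 2 * (L ^ 2 + Fintype.card ι * v) := by
  have hg2 : MemLp g 2 P :=
    (memLp_top_of_bound hg.aestronglyMeasurable L hgL).mono_exponent le_top
  have hz2 : MemLp z 2 P := memLp_two_of_hasLaw_coord hz.aestronglyMeasurable hzlaw
  by_cases hy : MemLp (fun ω => x ω - xstar) 2 P
  swap
  -- Then the next iterate is not square integrable either: both integrals are the junk value 0.
  · have hy' : ¬MemLp (fun ω => x ω - η • (g ω + z ω) - xstar) 2 P := fun h => hy <|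
      (h.add ((hg2.add hz2).const_smul η)).ae_eq (.of_forall fun ω => by
        simp only [Pi.add_apply, Pi.smul_apply]
        abel)
    rw [integral_norm_sq_of_not_memLp (by fun_prop) hy,
      integral_norm_sq_of_not_memLp (by fun_prop) hy']
    simp only [mul_zero, zero_add]
    positivity
  have hcurv' : ν * ∫ ω, ‖x ω - xstar‖ ^ 2 ∂P ≤ ∫ ω, ⟪g ω, x ω - xstar⟫ ∂P := by
    rwa [integral_inner_eq_of_condExp_ae_eq hx.comap_le
      ((comap_measurable x).sub_const xstar).stronglyMeasurable (hg2.integrable_inner hy)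
      (hg2.integrable one_le_two) hunbiased]
  have hwz : IndepFun (fun ω => x ω - xstar - η • g ω) z P :=
    hindep.comp (φ := fun q : EuclideanSpace ℝ ι × EuclideanSpace ℝ ι => q.1 - xstar - η • q.2)
      (by fun_prop) measurable_id
  calc ∫ ω, ‖x ω - η • (g ω + z ω) - xstar‖ ^ 2 ∂P
      = ∫ ω, ‖(x ω - xstar - η • g ω) - η • z ω‖ ^ 2 ∂P := by
        congr with ω
        rw [smul_add]
        abel_nf
    _ = ∫ ω, ‖x ω - xstar - η • g ω‖ ^ 2 ∂P + η ^ 2 * (Fintype.card ι * v) := by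
        exact integral_norm_sub_smul_sq_of_hasLaw_coord (hy.sub (hg2.const_smul η))
          hz.aestronglyMeasurable hzlaw hwz η
    _ ≤ _ := by
        linarith [integral_norm_sub_smul_sq_le hy hg.aestronglyMeasurable hgL hη hcurv']

lemma le_two_mul_div_of_recurrence {a : ℕ → ℝ} {b : ℝ} (hb : 0 ≤ b) (ha1 : 0 ≤ a 1)
    (hrec : ∀ n : ℕ, 1 ≤ n → a (n + 1) ≤ (1 - 2 / n) * a n + b / n ^ 2) :
    ∀ t : ℕ, 2 ≤ t → a t ≤ 2 * b / t := by
  intro t ht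
  induction t, ht using Nat.le_induction with
  | base => linarith [hrec 1 le_rfl]
  | succ n hn ih =>
    have hn' : (2 : ℝ) ≤ n := by exact_mod_cast hn
    have hcoef : 0 ≤ 1 - 2 / (n : ℝ) := by
      rw [sub_nonneg, div_le_one (by linarith)]
      exact hn'
    calc a (n + 1) ≤ (1 - 2 / n) * a n + b / n ^ 2 := hrec n (by omega)
      _ ≤ (1 - 2 / n) * (2 * b / n) + b / n ^ 2 := by gcongr
      _ ≤ 2 * b / ↑(n + 1) := by
        push_cast
        field_simp
        nlinarith

/-- convergence lemma for noisy SGD with step sizes `η_t = 1/(νt)`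
under the expected-curvature condition:
`E‖x_t − x*‖² ≤ 2L²(1+pσ²)/(tν²)` for all `t ≥ 2`. -/
theorem noisy_sgd_convergence_lemma
    {p : ℕ}
    (F' : EuclideanSpace ℝ (Fin p) → EuclideanSpace ℝ (Fin p))
    (L σ ν : ℝ) (hν : 0 < ν)
    (xstar : EuclideanSpace ℝ (Fin p))
    {Ω : Type*} [MeasurableSpace Ω] (P : Measure Ω) [IsProbabilityMeasure P]
    (x g z : ℕ → Ω → EuclideanSpace ℝ (Fin p))
    (hx : ∀ t, Measurable (x t)) (hg : ∀ t, Measurable (g t))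
    (hzmeas : ∀ t, Measurable (z t))
    -- the stochastic gradient is unbiased given the current iterate
    (hunbiased : ∀ t,
      P[g t|MeasurableSpace.comap (x t) inferInstance] =ᵐ[P] fun ω => F' (x t ω))
    -- the stochastic gradient is bounded by the Lipschitz constant
    (hgbound : ∀ t, ∀ᵐ ω ∂P, ‖g t ω‖ ≤ L)
    -- the injected noise is Gaussian `N(0, L²σ²I_p)`, independent of everything else
    (hgauss : ∀ t, IsGaussianVec P (z t) ⟨L ^ 2 * σ ^ 2, by positivity⟩)
    (hindep : ∀ t, IndepFun (fun ω => (x t ω, g t ω)) (z t) P)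
    -- SGD update with step size `η_t = 1/(νt)`
    (hupdate : ∀ t ω, x (t + 1) ω = x t ω - (1 / (ν * t)) • (g t ω + z t ω))
    -- expected-curvature condition along the trajectory
    (hcurv : ∀ t, (∫ ω, (inner ℝ (F' (x t ω)) (x t ω - xstar) : ℝ) ∂P) ≥
      ν * ∫ ω, ‖x t ω - xstar‖ ^ 2 ∂P)
    (t : ℕ) (ht : 2 ≤ t) :
    (∫ ω, ‖x t ω - xstar‖ ^ 2 ∂P) ≤
      2 * L ^ 2 * (1 + p * σ ^ 2) / (t * ν ^ 2) := by
  have hstep : ∀ n : ℕ, 1 ≤ n → ∫ ω, ‖x (n + 1) ω - xstar‖ ^ 2 ∂P ≤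
      (1 - 2 / n) * ∫ ω, ‖x n ω - xstar‖ ^ 2 ∂P + L ^ 2 * (1 + p * σ ^ 2) / ν ^ 2 / n ^ 2 := by
    intro n hn
    have hn' : (0 : ℝ) < n := by exact_mod_cast hn
    have h := integral_norm_sq_sgd_step_le (η := 1 / (ν * n)) (hx n) (hg n) (hzmeas n)
      (hunbiased n) (hgbound n) (fun i => { map_eq := (hgauss n).1 i }) (hindep n)
      (by positivity) (hcurv n)
    simp only [hupdate]
    convert h using 2
    · field_simp
    · rw [Fintype.card_fin]
      -- unfolds the coercion of `⟨L ^ 2 * σ ^ 2, _⟩ : ℝ≥0`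
      change _ = _ * (_ + _ * (L ^ 2 * σ ^ 2))
      field_simp
  have hbound := le_two_mul_div_of_recurrence (a := fun n => ∫ ω, ‖x n ω - xstar‖ ^ 2 ∂P)
    (by positivity) (integral_nonneg fun _ => by positivity) hstep t ht
  calc _ ≤ 2 * (L ^ 2 * (1 + p * σ ^ 2) / ν ^ 2) / t := hbound
    _ = _ := by ring
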